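/- Let m, ℓ be positive integers with ℓ ≤ m, let j be an integer, and let 𝓛 ⊂ ℝ² be the set of all integer linear combinations of the vectors (j, 1/2) and (2^{m+ℓ}, 0). Let λ₁ denote the minimum Euclidean norm of a nonzero vector of 𝓛. If λ₁ > 2^{ℓ − 1/2}, then the number of vectors w ∈ 𝓛 with ‖w‖ ≤ 2^{m − 1/2} is at most 6√3·2^{m−ℓ}. -/

import Mathlib

/-- The lattice spanned by `(j, 1/2)` and `(2^{m+ℓ}, 0)`, i.e.\ the set of all
integer linear combinations of these two vectors, as a subset of `ℝ × ℝ`. -/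
def ShorLattice (j : ℤ) (m ℓ : ℕ) : Set (ℝ × ℝ) :=
  {v | ∃ a b : ℤ, v = (a : ℝ) • ((j : ℝ), (1 : ℝ) / 2) +
    (b : ℝ) • ((2 ^ (m + ℓ) : ℝ), (0 : ℝ))}

/-- The Euclidean norm on `ℝ × ℝ`. -/
noncomputable def enorm2 (v : ℝ × ℝ) : ℝ :=
  Real.sqrt (v.1 ^ 2 + v.2 ^ 2)

/-! ### Auxiliary lemmas -/

lemma en_nonneg (v : ℝ × ℝ) : 0 ≤ enorm2 v := Real.sqrt_nonneg _

lemma en_fst (v : ℝ × ℝ) : |v.1| ≤ enorm2 v := by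
  rw [enorm2, ← Real.sqrt_sq_eq_abs]
  exact Real.sqrt_le_sqrt (by nlinarith [sq_nonneg v.2])

lemma en_snd (v : ℝ × ℝ) : |v.2| ≤ enorm2 v := by
  rw [enorm2, ← Real.sqrt_sq_eq_abs]
  exact Real.sqrt_le_sqrt (by nlinarith [sq_nonneg v.1])

lemma cs2 (a b c d : ℝ) : a*c + b*d ≤ Real.sqrt (a^2+b^2) * Real.sqrt (c^2+d^2) := by
  rw [← Real.sqrt_mul (by positivity)]
  calc a*c+b*d ≤ |a*c+b*d| := le_abs_self _
    _ = Real.sqrt ((a*c+b*d)^2) := (Real.sqrt_sq_eq_abs _).symm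
    _ ≤ _ := Real.sqrt_le_sqrt (by nlinarith [sq_nonneg (a*d - b*c)])

lemma cs2' (a b c d : ℝ) : |a*c + b*d| ≤ Real.sqrt (a^2+b^2) * Real.sqrt (c^2+d^2) := by
  rcases abs_cases (a*c + b*d) with ⟨h, _⟩ | ⟨h, _⟩
  · rw [h]; exact cs2 a b c d
  · rw [h]
    calc -(a*c+b*d) = (-a)*c + (-b)*d := by ring
      _ ≤ Real.sqrt ((-a)^2+(-b)^2) * Real.sqrt (c^2+d^2) := cs2 (-a) (-b) c d
      _ = _ := by ring_nf

lemma en_sub_le (u v : ℝ × ℝ) : enorm2 (u - v) ≤ enorm2 u + enorm2 v := by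
  have hcs := cs2 u.1 u.2 v.1 v.2
  have h1 := Real.sq_sqrt (show (0:ℝ) ≤ u.1^2+u.2^2 by positivity)
  have h2 := Real.sq_sqrt (show (0:ℝ) ≤ v.1^2+v.2^2 by positivity)
  have h3 := Real.sqrt_nonneg (u.1^2+u.2^2)
  have h4 := Real.sqrt_nonneg (v.1^2+v.2^2)
  rw [enorm2, Prod.fst_sub, Prod.snd_sub]
  calc Real.sqrt ((u.1-v.1)^2 + (u.2-v.2)^2)
      ≤ Real.sqrt ((enorm2 u + enorm2 v)^2) := by
        apply Real.sqrt_le_sqrt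
        have hcs2 := cs2 u.1 u.2 (-v.1) (-v.2)
        simp only [neg_sq] at hcs2
        rw [enorm2, enorm2]
        nlinarith
    _ = enorm2 u + enorm2 v := by
        rw [Real.sqrt_sq (by exact add_nonneg (en_nonneg u) (en_nonneg v))]

lemma gapcount (s : Finset ℤ) (g : ℤ) (hg : 0 < g) (L : ℝ) (hL : 0 ≤ L)
    (hgap : ∀ x ∈ s, ∀ y ∈ s, x ≠ y → g ≤ |x - y|)
    (hdiam : ∀ x ∈ s, ∀ y ∈ s, (|x - y| : ℝ) ≤ L) :
    (s.card : ℝ) ≤ L / g + 1 := by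
  have hgR : (0:ℝ) < (g:ℝ) := by exact_mod_cast hg
  have hLg : 0 ≤ L / g := div_nonneg hL hgR.le
  rcases s.eq_empty_or_nonempty with rfl | hne
  · simpa using by positivity
  set x₀ := s.min' hne with hx₀
  have hx₀mem : x₀ ∈ s := s.min'_mem hne
  set f : ℤ → ℤ := fun x => (x - x₀) / g with hf
  have hinj : Set.InjOn f s := by
    intro x hx y hy hfe
    by_contra hxy
    have hgx := hgap x hx y hy hxy
    have h1 : 0 ≤ x - x₀ := sub_nonneg.2 (s.min'_le x hx)
    have h2 : 0 ≤ y - x₀ := sub_nonneg.2 (s.min'_le y hy)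
    have e1 : g * ((x - x₀) / g) + (x - x₀) % g = x - x₀ := Int.mul_ediv_add_emod _ _
    have e2 : g * ((y - x₀) / g) + (y - x₀) % g = y - x₀ := Int.mul_ediv_add_emod _ _
    have r1 : 0 ≤ (x - x₀) % g := Int.emod_nonneg _ (ne_of_gt hg)
    have r2 : 0 ≤ (y - x₀) % g := Int.emod_nonneg _ (ne_of_gt hg)
    have r1' : (x - x₀) % g < g := Int.emod_lt_of_pos _ hg
    have r2' : (y - x₀) % g < g := Int.emod_lt_of_pos _ hg
    have hfe' : (x - x₀) / g = (y - x₀) / g := hfe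
    have hxy' : |x - y| < g := by
      rw [abs_lt]
      constructor <;> [nlinarith [hfe']; nlinarith [hfe']]
    linarith
  have himg : s.image f ⊆ Finset.Icc 0 ⌊L / (g:ℝ)⌋ := by
    intro n hn
    obtain ⟨x, hx, rfl⟩ := Finset.mem_image.1 hn
    have h1 : 0 ≤ x - x₀ := sub_nonneg.2 (s.min'_le x hx)
    refine Finset.mem_Icc.2 ⟨Int.ediv_nonneg h1 hg.le, ?_⟩
    rw [Int.le_floor]
    have e1 : g * ((x - x₀) / g) + (x - x₀) % g = x - x₀ := Int.mul_ediv_add_emod _ _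
    have r1 : 0 ≤ (x - x₀) % g := Int.emod_nonneg _ (ne_of_gt hg)
    have hle0 : g * ((x - x₀) / g) ≤ x - x₀ := by linarith
    have hle : (((x - x₀) / g : ℤ) : ℝ) * g ≤ ((x - x₀ : ℤ) : ℝ) := by
      have := (@Int.cast_le ℝ _ _ _).2 hle0
      push_cast at this ⊢
      linarith
    have hd : ((x - x₀ : ℤ) : ℝ) ≤ L := by
      calc ((x - x₀ : ℤ) : ℝ) ≤ |((x - x₀ : ℤ) : ℝ)| := le_abs_self _
        _ ≤ L := by rw [← Int.cast_abs]; exact_mod_cast hdiam x hx x₀ hx₀mem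
    rw [le_div_iff₀ hgR]
    linarith
  have hcard : s.card = (s.image f).card := (Finset.card_image_of_injOn hinj).symm
  have hIcc : ((s.image f).card : ℝ) ≤ L / g + 1 := by
    have h := Finset.card_le_card himg
    have hfl : 0 ≤ ⌊L / (g:ℝ)⌋ := Int.floor_nonneg.2 hLg
    have hcc : (Finset.Icc (0:ℤ) ⌊L / (g:ℝ)⌋).card = (⌊L / (g:ℝ)⌋ + 1).toNat := by
      rw [Int.card_Icc]; ring_nf
    have hfloorle : (⌊L / (g:ℝ)⌋ : ℝ) ≤ L / g := Int.floor_le _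
    rw [hcc] at h
    have h2 : ((Finset.image f s).card : ℤ) ≤ ⌊L / (g:ℝ)⌋ + 1 := by omega
    have h3 : ((Finset.image f s).card : ℝ) ≤ ((⌊L / (g:ℝ)⌋ + 1 : ℤ) : ℝ) :=
      (@Int.cast_le ℝ _ _ _).2 h2
    push_cast at h3
    linarith
  rw [hcard]
  exact hIcc

noncomputable def latA (w : ℝ × ℝ) : ℤ := round (2 * w.2)

noncomputable def latB (j : ℤ) (m ℓ : ℕ) (w : ℝ × ℝ) : ℤ :=
  round ((w.1 - latA w * j) / 2 ^ (m + ℓ))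

lemma shor_mem_iff {j : ℤ} {m ℓ : ℕ} {w : ℝ × ℝ} :
    w ∈ ShorLattice j m ℓ ↔ ∃ a b : ℤ,
      w.1 = a * j + b * 2 ^ (m + ℓ) ∧ w.2 = (a : ℝ) / 2 := by
  constructor
  · rintro ⟨a, b, rfl⟩
    exact ⟨a, b, by simp [Prod.smul_mk, smul_eq_mul], by simp [Prod.smul_mk, smul_eq_mul]; ring⟩
  · rintro ⟨a, b, h1, h2⟩
    refine ⟨a, b, ?_⟩
    ext
    · simp [Prod.smul_mk, smul_eq_mul, h1]
    · simp [Prod.smul_mk, smul_eq_mul, h2]; ring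

lemma latAB_eq {j : ℤ} {m ℓ : ℕ} {w : ℝ × ℝ} (a b : ℤ)
    (h1 : w.1 = a * j + b * 2 ^ (m + ℓ)) (h2 : w.2 = (a : ℝ) / 2) :
    latA w = a ∧ latB j m ℓ w = b := by
  have hA : latA w = a := by
    rw [latA, h2]
    rw [show 2 * ((a:ℝ)/2) = (a:ℝ) by ring, round_intCast]
  refine ⟨hA, ?_⟩
  rw [latB, hA, h1]
  have hp : (0:ℝ) < 2 ^ (m + ℓ) := by positivity
  rw [show ((a:ℝ) * j + b * 2 ^ (m+ℓ) - a * j) / 2 ^ (m+ℓ) = (b:ℝ) by field_simp; ring]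
  exact round_intCast b

lemma shor_rep {j : ℤ} {m ℓ : ℕ} {w : ℝ × ℝ} (hw : w ∈ ShorLattice j m ℓ) :
    w.1 = (latA w : ℝ) * j + (latB j m ℓ w : ℝ) * 2 ^ (m + ℓ) ∧
      w.2 = (latA w : ℝ) / 2 := by
  obtain ⟨a, b, h1, h2⟩ := shor_mem_iff.1 hw
  obtain ⟨hA, hB⟩ := latAB_eq a b h1 h2
  rw [hA, hB]; exact ⟨h1, h2⟩

lemma shor_sub {j : ℤ} {m ℓ : ℕ} {w w' : ℝ × ℝ} (hw : w ∈ ShorLattice j m ℓ)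
    (hw' : w' ∈ ShorLattice j m ℓ) : w - w' ∈ ShorLattice j m ℓ := by
  obtain ⟨a, b, h1, h2⟩ := shor_mem_iff.1 hw
  obtain ⟨a', b', h1', h2'⟩ := shor_mem_iff.1 hw'
  refine shor_mem_iff.2 ⟨a - a', b - b', ?_, ?_⟩
  · rw [Prod.fst_sub, h1, h1']; push_cast; ring
  · rw [Prod.snd_sub, h2, h2']; push_cast; ring

lemma shor_sub_rep {j : ℤ} {m ℓ : ℕ} {w w' : ℝ × ℝ} (hw : w ∈ ShorLattice j m ℓ)
    (hw' : w' ∈ ShorLattice j m ℓ) :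
    latA (w - w') = latA w - latA w' ∧
      latB j m ℓ (w - w') = latB j m ℓ w - latB j m ℓ w' := by
  obtain ⟨h1, h2⟩ := shor_rep hw
  obtain ⟨h1', h2'⟩ := shor_rep hw'
  refine latAB_eq _ _ ?_ ?_
  · rw [Prod.fst_sub, h1, h1']; push_cast; ring
  · rw [Prod.snd_sub, h2, h2']; push_cast; ring

set_option maxHeartbeats 2000000 in
theorem stmt_14 (m ℓ : ℕ) (hm : 0 < m) (hℓ : 0 < ℓ) (hℓm : ℓ ≤ m) (j : ℤ)
    (hmin : ∀ w ∈ ShorLattice j m ℓ, w ≠ 0 →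
      (2 : ℝ) ^ ((ℓ : ℝ) - 1 / 2) < enorm2 w) :
    {w ∈ ShorLattice j m ℓ | enorm2 w ≤ (2 : ℝ) ^ ((m : ℝ) - 1 / 2)}.Finite ∧
      ({w ∈ ShorLattice j m ℓ | enorm2 w ≤ (2 : ℝ) ^ ((m : ℝ) - 1 / 2)}.ncard : ℝ) ≤
        6 * Real.sqrt 3 * 2 ^ (m - ℓ) := by
  classical
  set R : ℝ := (2 : ℝ) ^ ((m : ℝ) - 1/2) with hRdef
  set S : Set (ℝ × ℝ) := {w ∈ ShorLattice j m ℓ | enorm2 w ≤ R} with hSdef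
  set E : ℝ := (2 : ℝ) ^ (m + ℓ) with hEdef
  set t : ℝ := (2 : ℝ) ^ (m - ℓ) with htdef
  set lamb : ℝ := (2 : ℝ) ^ ((ℓ : ℝ) - 1/2) with hlambdef
  have hR0 : 0 < R := Real.rpow_pos_of_pos (by norm_num) _
  have hE0 : (0:ℝ) < E := by positivity
  have ht1 : (1:ℝ) ≤ t := one_le_pow₀ (by norm_num)
  have hlamb0 : 0 < lamb := Real.rpow_pos_of_pos (by norm_num) _
  -- rpow identities
  have hcastsub : ((m - ℓ : ℕ) : ℝ) = (m : ℝ) - (ℓ : ℝ) := by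
    push_cast [Nat.cast_sub hℓm]; ring
  have hEr : E = (2:ℝ) ^ (((m + ℓ : ℕ)) : ℝ) := by
    rw [Real.rpow_natCast]
  have htr : t = (2:ℝ) ^ (((m - ℓ : ℕ)) : ℝ) := by
    rw [Real.rpow_natCast]
  have hpadd : ∀ a b : ℝ, (2:ℝ)^(a+b) = (2:ℝ)^a * (2:ℝ)^b :=
    fun a b => Real.rpow_add (by norm_num) a b
  have h2RE : 2 * R < E := by
    have e1 : 2 * R = (2:ℝ) ^ (1 + ((m:ℝ) - 1/2)) := by
      rw [hpadd, Real.rpow_one, hRdef]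
    rw [e1, hEr]
    apply Real.rpow_lt_rpow_of_exponent_lt (by norm_num)
    push_cast
    have : (1:ℝ) ≤ (ℓ:ℝ) := by exact_mod_cast hℓ
    linarith
  have hRRE : 2 * (R * R) = t * E := by
    have e1 : 2 * (R * R) = (2:ℝ) ^ (1 + (((m:ℝ) - 1/2) + ((m:ℝ) - 1/2))) := by
      rw [hpadd, Real.rpow_one, hpadd, hRdef]
    have e2 : t * E = (2:ℝ) ^ ((((m-ℓ:ℕ)):ℝ) + (((m+ℓ:ℕ)):ℝ)) := by
      rw [hpadd, htr, hEr]
    rw [e1, e2]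
    congr 1
    rw [hcastsub]; push_cast; ring
  have h2Rlamb : 2 * R = lamb * (2 * t) := by
    have e1 : 2 * R = (2:ℝ) ^ (1 + ((m:ℝ) - 1/2)) := by
      rw [hpadd, Real.rpow_one, hRdef]
    have e2 : lamb * (2 * t) = (2:ℝ) ^ (((ℓ:ℝ) - 1/2) + (1 + (((m-ℓ:ℕ)):ℝ))) := by
      rw [hpadd, hpadd, Real.rpow_one, hlambdef, htr]
    rw [e1, e2]
    congr 1
    rw [hcastsub]; ring
  -- basic membership facts
  have hSmem : ∀ w, w ∈ S ↔ w ∈ ShorLattice j m ℓ ∧ enorm2 w ≤ R := fun w => Iff.rfl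
  -- injectivity of latA on S
  have ha_inj : ∀ w ∈ S, ∀ w' ∈ S, latA w = latA w' → w = w' := by
    intro w hw w' hw' hAe
    obtain ⟨hwL, hwR⟩ := hw
    obtain ⟨hw'L, hw'R⟩ := hw'
    obtain ⟨h1, h2⟩ := shor_rep hwL
    obtain ⟨h1', h2'⟩ := shor_rep hw'L
    have hsnd : w.2 = w'.2 := by rw [h2, h2', hAe]
    have hfst : w.1 = w'.1 := by
      have hB : latB j m ℓ w = latB j m ℓ w' := by
        by_contra hB
        have h1R : |w.1| ≤ R := le_trans (en_fst w) hwR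
        have h2R' : |w'.1| ≤ R := le_trans (en_fst w') hw'R
        have hdiff : w.1 - w'.1 = ((latB j m ℓ w - latB j m ℓ w' : ℤ) : ℝ) * E := by
          rw [h1, h1', hAe]; push_cast; ring
        have habs : |((latB j m ℓ w - latB j m ℓ w' : ℤ) : ℝ)| * E ≤ 2 * R := by
          rw [← abs_of_pos hE0, ← abs_mul, ← hdiff]
          calc |w.1 - w'.1| ≤ |w.1| + |w'.1| := abs_sub _ _
            _ ≤ 2 * R := by linarith
        have hge : (1:ℝ) ≤ |((latB j m ℓ w - latB j m ℓ w' : ℤ) : ℝ)| := by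
          rw [← Int.cast_abs]
          have : (1:ℤ) ≤ |latB j m ℓ w - latB j m ℓ w'| := by
            have := abs_pos.2 (sub_ne_zero.2 hB)
            omega
          exact_mod_cast this
        have hEc : E ≤ |((latB j m ℓ w - latB j m ℓ w' : ℤ) : ℝ)| * E :=
          le_mul_of_one_le_left hE0.le hge
        linarith
      rw [h1, h1', hAe, hB]
    exact Prod.ext hfst hsnd
  -- finiteness
  have hfin : S.Finite := by
    apply Set.Finite.of_finite_image (f := latA) _ (fun w hw w' hw' h => ha_inj w hw w' hw' h)
    apply Set.Finite.subset (Finset.Icc (-⌊2*R⌋) ⌊2*R⌋ : Finset ℤ).finite_toSet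
    rintro n ⟨w, hw, rfl⟩
    obtain ⟨hwL, hwR⟩ := hw
    obtain ⟨h1, h2⟩ := shor_rep hwL
    have hbnd : |(latA w : ℝ)| ≤ 2 * R := by
      have h2' : (latA w : ℝ) = 2 * w.2 := by rw [h2]; ring
      rw [h2', abs_mul, abs_of_pos (by norm_num : (0:ℝ) < 2)]
      have h3 := en_snd w
      linarith
    have habs : |latA w| ≤ ⌊2*R⌋ := by
      rw [Int.le_floor]
      rw [← Int.cast_abs] at hbnd
      exact_mod_cast hbnd
    simp only [Finset.coe_Icc, Set.mem_Icc]
    exact abs_le.1 habs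
  refine ⟨hfin, ?_⟩
  have h63 : (10:ℝ) ≤ 6 * Real.sqrt 3 := by
    nlinarith [Real.sq_sqrt (show (0:ℝ) ≤ 3 by norm_num), Real.sqrt_nonneg 3]
  have ht0 : (0:ℝ) < t := by positivity
  set T := hfin.toFinset with hTdef
  have hTmem : ∀ w, w ∈ T ↔ w ∈ S := fun w => Set.Finite.mem_toFinset hfin
  have hncard : (S.ncard : ℝ) = (T.card : ℝ) := by
    rw [Set.ncard_eq_toFinset_card S hfin]
  by_cases hc : T.card ≤ 1
  · have h1 : (S.ncard : ℝ) ≤ 1 := by rw [hncard]; exact_mod_cast hc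
    calc (S.ncard:ℝ) ≤ 1 := h1
      _ ≤ 6 * Real.sqrt 3 * t := by
          have := mul_le_mul_of_nonneg_right h63 ht0.le
          linarith
  · push_neg at hc
    obtain ⟨p, hp, q, hq, hpq⟩ := Finset.one_lt_card.1 hc
    set Pairs := (T ×ˢ T).filter (fun z : (ℝ×ℝ)×(ℝ×ℝ) => z.1 ≠ z.2) with hPairs
    have hPne : Pairs.Nonempty :=
      ⟨(p,q), by simp [hPairs, Finset.mem_filter, Finset.mem_product, hp, hq, hpq]⟩
    obtain ⟨z, hz, hzmin⟩ := Finset.exists_min_image Pairs (fun z => enorm2 (z.1 - z.2)) hPne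
    simp only [hPairs, Finset.mem_filter, Finset.mem_product] at hz
    obtain ⟨⟨hz1T, hz2T⟩, hzne⟩ := hz
    set lam := enorm2 (z.1 - z.2) with hlamdef
    have hminT : ∀ w ∈ T, ∀ w' ∈ T, w ≠ w' → lam ≤ enorm2 (w - w') := by
      intro w hw w' hw' hne
      exact hzmin (w, w')
        (by simp [hPairs, Finset.mem_filter, Finset.mem_product, hw, hw', hne])
    have hz1S : z.1 ∈ S := (hTmem _).1 hz1T
    have hz2S : z.2 ∈ S := (hTmem _).1 hz2T
    obtain ⟨hz1L, hz1R⟩ := hz1S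
    obtain ⟨hz2L, hz2R⟩ := hz2S
    have huL : z.1 - z.2 ∈ ShorLattice j m ℓ := shor_sub hz1L hz2L
    have hune : z.1 - z.2 ≠ 0 := sub_ne_zero.2 hzne
    have hlamlb : lamb < lam := hmin _ huL hune
    have hlam0 : 0 < lam := lt_trans hlamb0 hlamlb
    have hlamub : lam ≤ 2 * R :=
      le_trans (en_sub_le _ _) (by linarith [le_trans (en_fst z.1) hz1R])
    -- representation of u = z.1 - z.2
    set A : ℤ := latA z.1 - latA z.2 with hAdef
    set B : ℤ := latB j m ℓ z.1 - latB j m ℓ z.2 with hBdef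
    obtain ⟨hAu, hBu⟩ := shor_sub_rep hz1L hz2L
    obtain ⟨hu1, hu2⟩ := shor_rep huL
    rw [hAu, hBu] at hu1
    rw [hAu] at hu2
    set X : ℝ := (z.1 - z.2).1 with hXdef
    have hXe : X = (A:ℝ) * j + (B:ℝ) * E := by
      rw [hAdef, hBdef, hEdef]; exact_mod_cast hu1
    have hA0 : A ≠ 0 := by
      intro h
      apply hzne
      apply ha_inj _ ((hTmem _).1 hz1T) _ ((hTmem _).1 hz2T)
      have h' : latA z.1 - latA z.2 = 0 := by rw [← hAdef]; exact h
      omega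
    have hlam_eq : lam = Real.sqrt (X ^ 2 + ((A:ℝ)/2) ^ 2) := by
      rw [hlamdef, enorm2, ← hXdef, hu2, hAdef]
    -- the line index function
    set fN : ℝ × ℝ → ℤ := fun w => latA w * B - A * latB j m ℓ w with hfNdef
    have hNb : ∀ w ∈ T, (|fN w| : ℝ) * (E / 2) ≤ lam * R := by
      intro w hw
      obtain ⟨hwL, hwR⟩ := (hTmem w).1 hw
      obtain ⟨h1, h2⟩ := shor_rep hwL
      have key : ((fN w : ℤ) : ℝ) * (E / 2) = (-(A:ℝ)/2) * w.1 + X * w.2 := by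
        rw [hfNdef]
        simp only
        rw [h1, h2, hXe, hEdef]
        push_cast
        ring
      have hcs : |(-(A:ℝ)/2) * w.1 + X * w.2| ≤
          Real.sqrt ((-(A:ℝ)/2)^2 + X^2) * Real.sqrt (w.1^2 + w.2^2) := cs2' _ _ _ _
      have hsq : Real.sqrt ((-(A:ℝ)/2)^2 + X^2) = lam := by
        rw [hlam_eq]; congr 1; ring
      have hen : Real.sqrt (w.1^2 + w.2^2) = enorm2 w := rfl
      rw [hsq, hen] at hcs
      have hE2 : (0:ℝ) < E / 2 := by positivity
      calc (|fN w| : ℝ) * (E / 2) = |((fN w : ℤ) : ℝ) * (E / 2)| := by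
            rw [abs_mul, abs_of_pos hE2]
        _ = |(-(A:ℝ)/2) * w.1 + X * w.2| := by rw [key]
        _ ≤ lam * enorm2 w := hcs
        _ ≤ lam * R := mul_le_mul_of_nonneg_left hwR hlam0.le
    set x : ℝ := 2 * R / lam with hxdef
    set y : ℝ := 4 * lam * R / E with hydef
    have hx0 : 0 < x := by positivity
    have hy0 : 0 < y := by positivity
    -- bound on the number of lines
    have himgcard : ((T.image fN).card : ℝ) ≤ y + 1 := by
      have hgc := gapcount (T.image fN) 1 one_pos y hy0.le
        (by intro a ha b hb hab; exact Int.one_le_abs (sub_ne_zero.2 hab))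
        (by
          intro a ha b hb
          obtain ⟨w, hw, rfl⟩ := Finset.mem_image.1 ha
          obtain ⟨w', hw', rfl⟩ := Finset.mem_image.1 hb
          have h1 := hNb w hw
          have h2 := hNb w' hw'
          have hE2 : (0:ℝ) < E / 2 := by positivity
          have hb1 : |((fN w : ℤ) : ℝ)| ≤ 2 * lam * R / E := by
            rw [le_div_iff₀ hE0]; linarith [h1]
          have hb2 : |((fN w' : ℤ) : ℝ)| ≤ 2 * lam * R / E := by
            rw [le_div_iff₀ hE0]; linarith [h2]
          rw [hydef]
          calc |((fN w : ℤ) : ℝ) - ((fN w' : ℤ) : ℝ)|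
              ≤ |((fN w : ℤ) : ℝ)| + |((fN w' : ℤ) : ℝ)| := abs_sub _ _
            _ ≤ 2*lam*R/E + 2*lam*R/E := add_le_add hb1 hb2
            _ = 4*lam*R/E := by ring)
      norm_num at hgc
      exact hgc
    -- bound on each fiber
    have hfiber : ∀ n ∈ T.image fN, (T.filter (fun w => fN w = n)).card ≤ ⌊x⌋₊ + 1 := by
      intro n hn
      set F := T.filter (fun w => fN w = n) with hFdef
      have hFsub : ∀ w ∈ F, w ∈ T := fun w hw => (Finset.mem_filter.1 hw).1
      have hFn : ∀ w ∈ F, fN w = n := fun w hw => (Finset.mem_filter.1 hw).2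
      have hinjF : Set.InjOn latA F := fun w hw w' hw' h =>
        ha_inj _ ((hTmem _).1 (hFsub _ hw)) _ ((hTmem _).1 (hFsub _ hw')) h
      have hcardF : F.card = (F.image latA).card := (Finset.card_image_of_injOn hinjF).symm
      -- the key scaling identity for two points in the same fiber
      have hkey : ∀ w ∈ F, ∀ w' ∈ F,
          (|A| : ℝ) * enorm2 (w - w') = (|latA w - latA w'| : ℝ) * lam := by
        intro w hw w' hw'
        obtain ⟨hwL, hwR⟩ := (hTmem w).1 (hFsub _ hw)
        obtain ⟨hw'L, hw'R⟩ := (hTmem w').1 (hFsub _ hw')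
        obtain ⟨h1, h2⟩ := shor_rep hwL
        obtain ⟨h1', h2'⟩ := shor_rep hw'L
        have hBeq : (latA w - latA w') * B = A * (latB j m ℓ w - latB j m ℓ w') := by
          have e1 : fN w = n := hFn w hw
          have e2 : fN w' = n := hFn w' hw'
          rw [hfNdef] at e1 e2
          simp only at e1 e2
          linear_combination e1 - e2
        have hBeqR : ((latA w - latA w' : ℤ) : ℝ) * (B:ℝ) = (A:ℝ) *
            ((latB j m ℓ w - latB j m ℓ w' : ℤ) : ℝ) := by exact_mod_cast hBeq
        have hv1 : (w - w').1 = ((latA w - latA w' : ℤ) : ℝ) * j +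
            ((latB j m ℓ w - latB j m ℓ w' : ℤ) : ℝ) * E := by
          rw [Prod.fst_sub, h1, h1', hEdef]; push_cast; ring
        have hv2 : (w - w').2 = ((latA w - latA w' : ℤ) : ℝ) / 2 := by
          rw [Prod.snd_sub, h2, h2']; push_cast; ring
        have c1 : (A:ℝ) * (w - w').1 = ((latA w - latA w' : ℤ) : ℝ) * X := by
          rw [hv1, hXe]
          push_cast at hBeqR ⊢
          first
            | linear_combination (-2*E) * hBeqR
            | linear_combination (2*E) * hBeqR
            | linear_combination E * hBeqR
            | linear_combination (-E) * hBeqR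
            | linear_combination (-2*(2:ℝ)^(m+ℓ)) * hBeqR
            | linear_combination (2*(2:ℝ)^(m+ℓ)) * hBeqR
            | linear_combination ((2:ℝ)^(m+ℓ)) * hBeqR
            | linear_combination (-(2:ℝ)^(m+ℓ)) * hBeqR
        have c2 : (A:ℝ) * (w - w').2 = ((latA w - latA w' : ℤ) : ℝ) * ((A:ℝ)/2) := by
          rw [hv2]; ring
        rw [enorm2, hlam_eq]
        rw [← Real.sqrt_sq_eq_abs, ← Real.sqrt_sq_eq_abs,
          ← Real.sqrt_mul (sq_nonneg _), ← Real.sqrt_mul (sq_nonneg _)]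
        congr 1
        have e1 : ((A:ℝ) * (w - w').1)^2 = (((latA w - latA w' : ℤ) : ℝ) * X)^2 := by rw [c1]
        have e2 : ((A:ℝ) * (w - w').2)^2 =
            (((latA w - latA w' : ℤ) : ℝ) * ((A:ℝ)/2))^2 := by rw [c2]
        push_cast at e1 e2 ⊢
        linear_combination e1 + e2
      have hgc := gapcount (F.image latA) |A| (abs_pos.2 hA0) (2*R*|A|/lam)
        (by positivity)
        (by
          intro a ha b hb hab
          obtain ⟨w, hw, rfl⟩ := Finset.mem_image.1 ha
          obtain ⟨w', hw', rfl⟩ := Finset.mem_image.1 hb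
          have hwne : w ≠ w' := fun h => hab (by rw [h])
          have hmin' := hminT w (hFsub _ hw) w' (hFsub _ hw') hwne
          have hks := hkey w hw w' hw'
          have hApos : (0:ℝ) < (|A| : ℝ) := by exact_mod_cast abs_pos.2 hA0
          have hstep : (|A| : ℝ) * lam ≤ (|latA w - latA w'| : ℝ) * lam := by
            have := mul_le_mul_of_nonneg_left hmin' (abs_nonneg (A:ℝ))
            linarith [hks]
          have h2 : (|A| : ℝ) ≤ (|latA w - latA w'| : ℝ) :=
            le_of_mul_le_mul_right hstep hlam0
          exact_mod_cast h2)
        (by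
          intro a ha b hb
          obtain ⟨w, hw, rfl⟩ := Finset.mem_image.1 ha
          obtain ⟨w', hw', rfl⟩ := Finset.mem_image.1 hb
          have hks := hkey w hw w' hw'
          obtain ⟨hwL, hwR⟩ := (hTmem w).1 (hFsub _ hw)
          obtain ⟨hw'L, hw'R⟩ := (hTmem w').1 (hFsub _ hw')
          have hApos : (0:ℝ) < (|A| : ℝ) := by exact_mod_cast abs_pos.2 hA0
          have hvub : enorm2 (w - w') ≤ 2 * R := le_trans (en_sub_le _ _) (by linarith)
          have h2 : (|latA w - latA w'| : ℝ) * lam ≤ (|A| : ℝ) * (2 * R) := by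
            have := mul_le_mul_of_nonneg_left hvub (abs_nonneg (A:ℝ))
            linarith [hks]
          rw [le_div_iff₀ hlam0]
          have hAc : ((|A| : ℤ) : ℝ) = |(A : ℝ)| := by push_cast; ring
          rw [hAc]
          linarith [h2])
      have hdiveq : (2*R*|A|/lam) / ((|A| : ℤ) : ℝ) = x := by
        have hApos : (0:ℝ) < ((|A| : ℤ) : ℝ) := by exact_mod_cast abs_pos.2 hA0
        rw [hxdef]
        field_simp
      rw [hdiveq] at hgc
      rw [← hcardF] at hgc
      have hlt : (F.card : ℝ) < (⌊x⌋₊ : ℝ) + 2 := by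
        have := Nat.lt_floor_add_one x
        linarith
      have : (F.card : ℕ) < ⌊x⌋₊ + 2 := by exact_mod_cast hlt
      omega
    have hcount : T.card ≤ (⌊x⌋₊ + 1) * (T.image fN).card :=
      Finset.card_le_mul_card_image T (⌊x⌋₊ + 1) (by
        intro b hb
        exact hfiber b hb)
    -- final numeric computation
    have hxy4 : x * y = 4 * t := by
      rw [hxdef, hydef]
      rw [div_mul_div_comm]
      rw [div_eq_iff (by positivity : lam * E ≠ 0)]
      linear_combination (4*lam) * hRRE
    have hx1 : 1 ≤ x := by
      rw [hxdef, le_div_iff₀ hlam0]; linarith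
    have hx2t : x ≤ 2 * t := by
      rw [hxdef, div_le_iff₀ hlam0]
      have := mul_le_mul_of_nonneg_right hlamlb.le (by positivity : (0:ℝ) ≤ 2*t)
      linarith
    clear_value x y
    have key2 : x^2 + 4*t ≤ (4*t+1)*x := by
      have hh := mul_nonneg (sub_nonneg.2 hx1)
        (sub_nonneg.2 (show x ≤ 4*t by linarith))
      nlinarith [hh]
    have h5 : x * (x + y) ≤ x * (4*t+1) := by nlinarith [key2, hxy4]
    have hxy5 : x + y ≤ 4*t+1 := le_of_mul_le_mul_left h5 hx0
    have hfinal : (x+1)*(y+1) ≤ 10 * t := by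
      have hexp : (x+1)*(y+1) = x*y + (x + y) + 1 := by ring
      rw [hexp, hxy4]
      linarith [hxy5, ht1]
    have hreal : (T.card : ℝ) ≤ (x+1)*(y+1) := by
      have h1 : (T.card : ℝ) ≤ ((⌊x⌋₊ + 1 : ℕ) : ℝ) * ((T.image fN).card : ℝ) := by
        exact_mod_cast hcount
      have h2 : ((⌊x⌋₊ + 1 : ℕ) : ℝ) ≤ x + 1 := by
        push_cast
        linarith [Nat.floor_le hx0.le]
      calc (T.card : ℝ) ≤ ((⌊x⌋₊ + 1 : ℕ) : ℝ) * ((T.image fN).card : ℝ) := h1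
        _ ≤ (x+1)*(y+1) := by
            apply mul_le_mul h2 himgcard (by positivity) (by linarith)
    rw [hncard]
    calc (T.card : ℝ) ≤ (x+1)*(y+1) := hreal
      _ ≤ 10 * t := hfinal
      _ ≤ 6 * Real.sqrt 3 * t := by
          have := mul_le_mul_of_nonneg_right h63 ht0.le
          linarith
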